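/- arXiv:1011.3350 — 5 statements merged into one kernel-verified Lean document; each statement's English description precedes it below -/
import Mathlib

section
/- Let G be a finite group and {A_i} an inverse system of G-modules indexed by the natural numbers with transition maps φ_{ji}: A_j → A_i for j > i. If every φ_{ji} is surjective, then the natural map H^1(G, lim A_i) → lim H^1(G, A_i) is surjective. -/
/-!
Choose cocycles `x n` representing the classes `α n` inductively, with `φ n ∘ x (n + 1) = x n`.
Given `x n`, any representative of `α (n + 1)` maps to a cocycle differing from `x n` by a
coboundary `g ↦ g • b - b`; lifting `b` through the surjection `φ n` corrects the representative
by a coboundary. A compatible family of cocycles is a cocycle with values in the inverse limit.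
-/

section H1
variable (G : Type) [Group G]

/-- 1-cocycles of `G` with values in `M`. -/
def zc (M : Type) [AddCommGroup M] [DistribMulAction G M] : AddSubgroup (G → M) where
  carrier := {f | ∀ g h : G, f (g * h) = f g + g • f h}
  zero_mem' := by intro g h; simp
  add_mem' := by
    intro a b ha hb g h
    simp only [Pi.add_apply]
    rw [ha g h, hb g h, smul_add]
    abel
  neg_mem' := by
    intro a ha g h
    simp only [Pi.neg_apply]
    rw [ha g h, smul_neg]
    abel

/-- 1-coboundaries of `G` with values in `M`. -/
def cb (M : Type) [AddCommGroup M] [DistribMulAction G M] : AddSubgroup (G → M) where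
  carrier := {f | ∃ m : M, ∀ g : G, f g = g • m - m}
  zero_mem' := ⟨0, fun g => by simp⟩
  add_mem' := by
    rintro a b ⟨m, hm⟩ ⟨m', hm'⟩
    refine ⟨m + m', fun g => ?_⟩
    simp only [Pi.add_apply, hm g, hm' g, smul_add]
    abel
  neg_mem' := by
    rintro a ⟨m, hm⟩
    refine ⟨-m, fun g => ?_⟩
    simp only [Pi.neg_apply, hm g, smul_neg]
    abel

/-- First group cohomology `H¹(G, M)` defined via 1-cocycles modulo 1-coboundaries. -/
abbrev H1 (M : Type) [AddCommGroup M] [DistribMulAction G M] : Type :=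
  zc G M ⧸ ((cb G M).addSubgroupOf (zc G M))

variable {G}

/-- The map on 1-cocycles induced by an equivariant homomorphism. -/
def zcMap {M N : Type} [AddCommGroup M] [DistribMulAction G M] [AddCommGroup N]
    [DistribMulAction G N] (φ : M →+ N) (hφ : ∀ (g : G) (m : M), φ (g • m) = g • φ m) :
    zc G M →+ zc G N where
  toFun f := ⟨fun g => φ (f.1 g), by
    intro g h
    have hf : f.1 (g * h) = f.1 g + g • f.1 h := f.2 g h
    dsimp only
    rw [hf, map_add, hφ]⟩
  map_zero' := Subtype.ext (funext fun g => by simp)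
  map_add' a b := Subtype.ext (funext fun g => by simp)

/-- The map on `H¹` induced by an equivariant homomorphism. -/
def H1map {M N : Type} [AddCommGroup M] [DistribMulAction G M] [AddCommGroup N]
    [DistribMulAction G N] (φ : M →+ N) (hφ : ∀ (g : G) (m : M), φ (g • m) = g • φ m) :
    H1 G M →+ H1 G N :=
  QuotientAddGroup.map _ _ (zcMap φ hφ) (by
    intro f h
    rw [AddSubgroup.mem_addSubgroupOf] at h
    rw [AddSubgroup.mem_comap, AddSubgroup.mem_addSubgroupOf]
    obtain ⟨m, hm⟩ := h
    exact ⟨φ m, fun g => by simp [zcMap, hm g, hφ]⟩)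

end H1

section Lim
variable (G : Type) [Group G]
variable (A : ℕ → Type) [∀ n, AddCommGroup (A n)] (φ : ∀ n, A (n + 1) →+ A n)

/-- The inverse limit of a tower of abelian groups, as a subgroup of the product. -/
def limSub : AddSubgroup (∀ n, A n) where
  carrier := {a | ∀ n, φ n (a (n + 1)) = a n}
  zero_mem' := fun n => map_zero _
  add_mem' := by intro a b ha hb n; rw [Pi.add_apply, Pi.add_apply, map_add, ha n, hb n]
  neg_mem' := by intro a ha n; rw [Pi.neg_apply, Pi.neg_apply, map_neg, ha n]

variable [∀ n, DistribMulAction G (A n)]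
  (hφ : ∀ (n : ℕ) (g : G) (a : A (n + 1)), φ n (g • a) = g • φ n a)

/-- The `G`-action on the inverse limit of a tower of `G`-modules. -/
def limAct : DistribMulAction G (limSub A φ) where
  smul g a := ⟨fun n => g • a.1 n, fun n => by rw [hφ, a.2 n]⟩
  one_smul a := Subtype.ext (funext fun n => one_smul G (a.1 n))
  mul_smul g h a := Subtype.ext (funext fun n => mul_smul g h (a.1 n))
  smul_zero g := Subtype.ext (funext fun n => smul_zero g)
  smul_add g a b := Subtype.ext (funext fun n => smul_add g (a.1 n) (b.1 n))

/-- Projection from the inverse limit to the `n`-th term. -/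
def limProj (n : ℕ) : limSub A φ →+ A n :=
  (Pi.evalAddMonoidHom A n).comp (limSub A φ).subtype

end Lim

section Cocycles
variable {G : Type} [Group G] {M N : Type} [AddCommGroup M] [DistribMulAction G M]
  [AddCommGroup N] [DistribMulAction G N]

theorem H1map_mk (φ : M →+ N) (hφ : ∀ (g : G) (m : M), φ (g • m) = g • φ m) (x : zc G M) :
    H1map φ hφ (QuotientAddGroup.mk x) = QuotientAddGroup.mk (zcMap φ hφ x) :=
  rfl

theorem coboundary_mem_zc (m : M) : (fun g : G => g • m - m) ∈ zc G M := by
  intro g h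
  simp only [mul_smul, smul_sub]
  abel

theorem exists_zcMap_eq_of_mk_eq (φ : M →+ N) (hφ : ∀ (g : G) (m : M), φ (g • m) = g • φ m)
    (hs : Function.Surjective φ) (x : zc G M) (y : zc G N)
    (h : (QuotientAddGroup.mk (zcMap φ hφ x) : H1 G N) = QuotientAddGroup.mk y) :
    ∃ x' : zc G M, (QuotientAddGroup.mk x' : H1 G M) = QuotientAddGroup.mk x ∧
      zcMap φ hφ x' = y := by
  rw [QuotientAddGroup.eq, AddSubgroup.mem_addSubgroupOf] at h
  obtain ⟨n, hn⟩ := h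
  obtain ⟨m, rfl⟩ := hs n
  refine ⟨x + ⟨_, coboundary_mem_zc m⟩, ?_, ?_⟩
  · rw [eq_comm, QuotientAddGroup.eq, AddSubgroup.mem_addSubgroupOf]
    exact ⟨m, fun g => by simp⟩
  · ext g
    have hng : -φ (x.1 g) + y.1 g = g • φ m - φ m := hn g
    change φ (x.1 g + (g • m - m)) = y.1 g
    rw [map_add, map_sub, hφ, ← hng]
    abel

end Cocycles

theorem exists_seq_of_exists_succ {X : ℕ → Type} (P : ∀ n, X n → Prop)
    (R : ∀ n, X (n + 1) → X n → Prop) (h₀ : ∃ x, P 0 x)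
    (hsucc : ∀ n x, P n x → ∃ y, P (n + 1) y ∧ R n y x) :
    ∃ f : ∀ n, X n, ∀ n, P n (f n) ∧ R n (f (n + 1)) (f n) := by
  choose next hnext using fun n (x : {x // P n x}) => hsucc n x.1 x.2
  let f : ∀ n, {x // P n x} := fun n =>
    Nat.rec ⟨h₀.choose, h₀.choose_spec⟩ (fun n x => ⟨next n x, (hnext n x).1⟩) n
  exact ⟨fun n => (f n).1, fun n => ⟨(f n).2, (hnext n (f n)).2⟩⟩

section Lim
variable {G : Type} [Group G] {A : ℕ → Type} [∀ n, AddCommGroup (A n)]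
  [∀ n, DistribMulAction G (A n)] {φ : ∀ n, A (n + 1) →+ A n}
  {hφ : ∀ (n : ℕ) (g : G) (a : A (n + 1)), φ n (g • a) = g • φ n a}

theorem exists_compatible_zc (hsurj : ∀ n, Function.Surjective (φ n))
    (α : ∀ n, H1 G (A n)) (hα : ∀ n, H1map (φ n) (hφ n) (α (n + 1)) = α n) :
    ∃ x : ∀ n, zc G (A n), ∀ n, QuotientAddGroup.mk (x n) = α n ∧
      zcMap (φ n) (hφ n) (x (n + 1)) = x n := by
  refine exists_seq_of_exists_succ (fun n x => QuotientAddGroup.mk x = α n)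
    (fun n y x => zcMap (φ n) (hφ n) y = x) (QuotientAddGroup.mk_surjective (α 0)) ?_
  intro n x hx
  obtain ⟨y, hy⟩ := QuotientAddGroup.mk_surjective (α (n + 1))
  have hxy : (QuotientAddGroup.mk (zcMap (φ n) (hφ n) y) : H1 G (A n)) = QuotientAddGroup.mk x :=
    by rw [← H1map_mk, hy, hα, hx]
  obtain ⟨y', hy'y, hy'x⟩ := exists_zcMap_eq_of_mk_eq (φ n) (hφ n) (hsurj n) y x hxy
  exact ⟨y', hy'y.trans hy, hy'x⟩

def limZc (x : ∀ n, zc G (A n)) (hx : ∀ n, zcMap (φ n) (hφ n) (x (n + 1)) = x n) :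
    @zc G _ (limSub A φ) _ (limAct G A φ hφ) :=
  ⟨fun g => ⟨fun n => (x n).1 g, fun n => congrArg (fun z : zc G (A n) => z.1 g) (hx n)⟩,
    fun g h => Subtype.ext (funext fun n => (x n).2 g h)⟩

theorem H1map_limProj_mk_limZc (x : ∀ n, zc G (A n))
    (hx : ∀ n, zcMap (φ n) (hφ n) (x (n + 1)) = x n) (n : ℕ) :
    @H1map G _ ↥(limSub A φ) (A n) _ (limAct G A φ hφ) _ _ (limProj A φ n) (fun _ _ => rfl)
      (QuotientAddGroup.mk (limZc x hx)) = QuotientAddGroup.mk (x n) :=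
  rfl

end Lim

theorem stmt0_general (G : Type) [Group G]
    (A : ℕ → Type) [∀ n, AddCommGroup (A n)] [∀ n, DistribMulAction G (A n)]
    (φ : ∀ n, A (n + 1) →+ A n)
    (hφ : ∀ (n : ℕ) (g : G) (a : A (n + 1)), φ n (g • a) = g • φ n a)
    (hsurj : ∀ n, Function.Surjective (φ n)) :
    ∀ α : ∀ n, H1 G (A n), (∀ n, H1map (φ n) (hφ n) (α (n + 1)) = α n) →
      ∃ β : @H1 G _ ↥(limSub A φ) _ (limAct G A φ hφ),
        ∀ n, @H1map G _ ↥(limSub A φ) (A n) _ (limAct G A φ hφ) _ _ (limProj A φ n)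
          (fun _ _ => rfl) β = α n := by
  intro α hα
  obtain ⟨x, hx⟩ := exists_compatible_zc hsurj α hα
  refine ⟨QuotientAddGroup.mk (limZc x fun n => (hx n).2), fun n => ?_⟩
  rw [H1map_limProj_mk_limZc, (hx n).1]

/-- Let `G` be a finite group and `{A_i}` an inverse system of `G`-modules
indexed by ℕ with surjective transition maps. Then the natural map
`H¹(G, lim A_i) → lim H¹(G, A_i)` is surjective: every compatible family of cohomology
classes is the image of a class of the inverse limit. -/
theorem stmt0 (G : Type) [Group G] [Finite G]
    (A : ℕ → Type) [∀ n, AddCommGroup (A n)] [∀ n, DistribMulAction G (A n)]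
    (φ : ∀ n, A (n + 1) →+ A n)
    (hφ : ∀ (n : ℕ) (g : G) (a : A (n + 1)), φ n (g • a) = g • φ n a)
    (hsurj : ∀ n, Function.Surjective (φ n)) :
    ∀ α : ∀ n, H1 G (A n), (∀ n, H1map (φ n) (hφ n) (α (n + 1)) = α n) →
      ∃ β : @H1 G _ ↥(limSub A φ) _ (limAct G A φ hφ),
        ∀ n, @H1map G _ ↥(limSub A φ) (A n) _ (limAct G A φ hφ) _ _ (limProj A φ n)
          (fun _ _ => rfl) β = α n :=
  stmt0_general G A φ hφ hsurj
end

section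
/- Let G be a finite group and {A_i} an inverse system of G-modules indexed by the natural numbers with transition maps φ_{ji}: A_j → A_i for j > i. If for all j > i the induced map on G-invariants φ_{ji}^G: A_j^G → A_i^G is surjective, then the natural map H^1(G, lim A_i) → lim H^1(G, A_i) is injective. -/
/-!
Let `f` be a cocycle with values in `lim A_n` whose components `f_n` are all coboundaries,
and write `∂x = (g ↦ g • x - x)`. If `f_n = ∂x` and `f_{n+1} = ∂m`, then `φ m - x` is
`G`-invariant; lifting it to an invariant `d` gives `f_{n+1} = ∂(m - d)` with `φ (m - d) = x`.
Building the witnesses one level at a time thus produces a compatible sequence, i.e. an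
element of `lim A_n` bounding `f`.
-/

section Coboundary

variable {G : Type} [Group G] {M N : Type} [AddCommGroup M] [DistribMulAction G M]
  [AddCommGroup N] [DistribMulAction G N]

theorem H1_mk_eq_zero_iff (f : zc G M) :
    (QuotientAddGroup.mk f : H1 G M) = 0 ↔ ∃ m : M, ∀ g : G, f.1 g = g • m - m := by
  rw [QuotientAddGroup.eq_zero_iff, AddSubgroup.mem_addSubgroupOf]
  rfl

theorem H1map_mk_eq_zero_iff (ψ : M →+ N) (hψ : ∀ (g : G) (m : M), ψ (g • m) = g • ψ m)
    (f : zc G M) :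
    H1map ψ hψ (QuotientAddGroup.mk f) = 0 ↔ ∃ n : N, ∀ g : G, ψ (f.1 g) = g • n - n := by
  rw [H1map, QuotientAddGroup.map_mk, H1_mk_eq_zero_iff]
  rfl

theorem exists_coboundary_witness_lift (ψ : M →+ N)
    (hψ : ∀ (g : G) (m : M), ψ (g • m) = g • ψ m)
    (hsurj : ∀ a : N, (∀ g : G, g • a = a) → ∃ b : M, (∀ g : G, g • b = b) ∧ ψ b = a)
    {c : G → M} {m : M} (hm : ∀ g, c g = g • m - m)
    {x : N} (hx : ∀ g, ψ (c g) = g • x - x) :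
    ∃ y : M, (∀ g, c g = g • y - y) ∧ ψ y = x := by
  have hinv : ∀ g : G, g • (ψ m - x) = ψ m - x := by
    intro g
    have h := hx g
    rw [hm g, map_sub, hψ] at h
    rw [smul_sub, sub_eq_sub_iff_sub_eq_sub, h]
  obtain ⟨d, hd_inv, hd⟩ := hsurj _ hinv
  refine ⟨m - d, fun g => ?_, by rw [map_sub, hd, sub_sub_cancel]⟩
  rw [hm g, smul_sub, hd_inv g, sub_sub_sub_cancel_right]

end Coboundary

theorem exists_mem_limSub_of_forall_exists_lift {A : ℕ → Type} [∀ n, AddCommGroup (A n)]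
    {φ : ∀ n, A (n + 1) →+ A n} {P : ∀ n, A n → Prop} (h₀ : ∃ x, P 0 x)
    (hlift : ∀ n x, P n x → ∃ y, P (n + 1) y ∧ φ n y = x) :
    ∃ a ∈ limSub A φ, ∀ n, P n (a n) := by
  choose x₀ hx₀ using h₀
  choose lift hlift_P hlift_φ using hlift
  let a : ∀ n, {x : A n // P n x} := fun n =>
    Nat.rec ⟨x₀, hx₀⟩ (fun n p => ⟨lift n p.1 p.2, hlift_P n p.1 p.2⟩) n
  exact ⟨fun n => (a n).1, fun n => hlift_φ n (a n).1 (a n).2, fun n => (a n).2⟩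

theorem stmt1_general (G : Type) [Group G]
    (A : ℕ → Type) [∀ n, AddCommGroup (A n)] [∀ n, DistribMulAction G (A n)]
    (φ : ∀ n, A (n + 1) →+ A n)
    (hφ : ∀ (n : ℕ) (g : G) (a : A (n + 1)), φ n (g • a) = g • φ n a)
    (hsurjG : ∀ (n : ℕ) (a : A n), (∀ g : G, g • a = a) →
      ∃ b : A (n + 1), (∀ g : G, g • b = b) ∧ φ n b = a) :
    ∀ β : @H1 G _ ↥(limSub A φ) _ (limAct G A φ hφ),
      (∀ n, @H1map G _ ↥(limSub A φ) (A n) _ (limAct G A φ hφ) _ _ (limProj A φ n)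
        (fun _ _ => rfl) β = 0) → β = 0 := by
  let _ := limAct G A φ hφ
  intro β
  induction β using QuotientAddGroup.induction_on with
  | H f =>
    intro hzero
    have hbound : ∀ n, ∃ m : A n, ∀ g : G, (f.1 g).1 n = g • m - m := fun n =>
      (H1map_mk_eq_zero_iff _ _ f).1 (hzero n)
    obtain ⟨a, ha, hbounds⟩ := exists_mem_limSub_of_forall_exists_lift (φ := φ)
      (P := fun n x => ∀ g : G, (f.1 g).1 n = g • x - x) (hbound 0) fun n x hx => by
        obtain ⟨m, hm⟩ := hbound (n + 1)
        exact exists_coboundary_witness_lift (φ n) (hφ n) (hsurjG n) hm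
          fun g => ((f.1 g).2 n).trans (hx g)
    exact (H1_mk_eq_zero_iff f).2 ⟨⟨a, ha⟩, fun g => Subtype.ext (funext fun n => hbounds n g)⟩

/-- Let `G` be a finite group and `{A_i}` an inverse system of `G`-modules
indexed by ℕ such that the induced maps on `G`-invariants are surjective. Then the natural
map `H¹(G, lim A_i) → lim H¹(G, A_i)` is injective: a class of the inverse limit all of whose
projections vanish is zero. -/
theorem stmt1 (G : Type) [Group G] [Finite G]
    (A : ℕ → Type) [∀ n, AddCommGroup (A n)] [∀ n, DistribMulAction G (A n)]
    (φ : ∀ n, A (n + 1) →+ A n)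
    (hφ : ∀ (n : ℕ) (g : G) (a : A (n + 1)), φ n (g • a) = g • φ n a)
    (hsurjG : ∀ (n : ℕ) (a : A n), (∀ g : G, g • a = a) →
      ∃ b : A (n + 1), (∀ g : G, g • b = b) ∧ φ n b = a) :
    ∀ β : @H1 G _ ↥(limSub A φ) _ (limAct G A φ hφ),
      (∀ n, @H1map G _ ↥(limSub A φ) (A n) _ (limAct G A φ hφ) _ _ (limProj A φ n)
        (fun _ _ => rfl) β = 0) → β = 0 :=
  stmt1_general G A φ hφ hsurjG
end

section
/- For every prime p and every n ≥ 1, if (z_1,…,z_n) = Σ_{i=1}^p (x_{i1},…,x_{in}) is a sum of p Witt vectors of length n over the polynomial ring ℤ[x_{ij}], then for each 1 ≤ ℓ ≤ n there is a polynomial f_ℓ ∈ ℤ[x_{ij} : 1 ≤ i ≤ p, 1 ≤ j ≤ ℓ−1], all of whose monomials have total degree ≥ p, such that z_ℓ = Σ_{i=1}^p x_{iℓ} + f_ℓ. -/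
/-!
Write `z = ∑ i, x i`. Comparing the `ℓ`-th ghost components of `z` and of the summands gives
`p^ℓ (z_ℓ - ∑ i, x_{iℓ}) = ∑_{k<ℓ} p^k (∑ i, x_{ik}^{p^{ℓ-k}} - z_k^{p^{ℓ-k}})`.
By strong induction on `ℓ`, every `z_k` with `k < ℓ` has no constant term and involves only the
variables `x_{ij}` with `j ≤ k`, so every monomial on the right has degree at least `p` and
involves only variables with `j < ℓ`. Multiplying by `p^ℓ` does not change the support of a
polynomial over `ℤ`, so `z_ℓ - ∑ i, x_{iℓ}` has the same properties.
-/

open MvPolynomial Finset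

namespace MvPolynomial

variable (σ R : Type*) [CommSemiring R]

noncomputable def restrictTotalDegreeAtLeast (c : ℕ) : Submodule R (MvPolynomial σ R) :=
  restrictSupport R {m | c ≤ m.degree}

variable {σ R}

theorem restrictTotalDegreeAtLeast_antitone : Antitone (restrictTotalDegreeAtLeast σ R) :=
  fun _ _ hab => restrictSupport_mono R fun _ hm => le_trans hab hm

theorem X_mem_restrictTotalDegreeAtLeast_one (v : σ) :
    X v ∈ restrictTotalDegreeAtLeast σ R 1 :=
  (monomial_mem_restrictSupport R).2 (Or.inl (by simp))

theorem mul_mem_restrictTotalDegreeAtLeast {a b : ℕ} {f g : MvPolynomial σ R}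
    (hf : f ∈ restrictTotalDegreeAtLeast σ R a) (hg : g ∈ restrictTotalDegreeAtLeast σ R b) :
    f * g ∈ restrictTotalDegreeAtLeast σ R (a + b) := by
  refine restrictSupport_mono R ?_
    (restrictSupport_add (R := R) _ _ ▸ Submodule.mul_mem_mul hf hg)
  rintro _ ⟨m₁, h₁ : a ≤ m₁.degree, m₂, h₂ : b ≤ m₂.degree, rfl⟩
  exact (add_le_add h₁ h₂).trans_eq (map_add _ _ _).symm

theorem pow_mem_restrictTotalDegreeAtLeast {a : ℕ} {f : MvPolynomial σ R}
    (hf : f ∈ restrictTotalDegreeAtLeast σ R a) (k : ℕ) :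
    f ^ k ∈ restrictTotalDegreeAtLeast σ R (k * a) := by
  induction k with
  | zero =>
    rw [pow_zero, zero_mul]
    exact (mem_restrictSupport_iff R).2 fun _ _ => Nat.zero_le _
  | succ k ih => simpa [pow_succ, Nat.succ_mul] using mul_mem_restrictTotalDegreeAtLeast ih hf

variable {S : Type*} [Semiring S] [IsDomain S] [Module S R] [Module.IsTorsionFree S R]

theorem smul_mem_restrictSupport_iff {a : S} (ha : a ≠ 0) {s : Set (σ →₀ ℕ)}
    {f : MvPolynomial σ R} : a • f ∈ restrictSupport R s ↔ f ∈ restrictSupport R s := by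
  simp only [mem_restrictSupport_iff, support_smul_eq ha]

theorem smul_mem_supported_iff {a : S} (ha : a ≠ 0) {s : Set σ} {f : MvPolynomial σ R} :
    a • f ∈ supported R s ↔ f ∈ supported R s := by
  classical
  simp only [mem_supported, vars_eq_support_biUnion_support, support_smul_eq ha]

end MvPolynomial

namespace WittVector

variable {p : ℕ} [hp : Fact p.Prime] {ι : Type*} [Fintype ι]

theorem prime_pow_smul_coeff_sum_sub_sum_coeff {A : Type*} [CommRing A] (y : ι → WittVector p A)
    (ℓ : ℕ) :
    (p ^ ℓ : ℤ) • ((∑ i, y i).coeff ℓ - ∑ i, (y i).coeff ℓ) =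
      ∑ k ∈ range ℓ, (p ^ k : ℤ) •
        (∑ i, (y i).coeff k ^ p ^ (ℓ - k) - (∑ i, y i).coeff k ^ p ^ (ℓ - k)) := by
  have h := map_sum (ghostComponent (p := p) ℓ) y univ
  simp only [ghostComponent_apply, aeval_wittPolynomial, sum_range_succ, Nat.sub_self, pow_zero,
    pow_one, sum_add_distrib, ← mul_sum] at h
  rw [sum_comm] at h
  simp only [zsmul_eq_mul, mul_sub, sum_sub_distrib, mul_sum, Int.cast_pow, Int.cast_natCast]
    at h ⊢
  linear_combination h

variable {σ R : Type*} [CommRing R] [Module.IsTorsionFree ℤ R]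

theorem coeff_sum_sub_sum_coeff_mem_restrictTotalDegreeAtLeast
    (y : ι → WittVector p (MvPolynomial σ R)) (ℓ : ℕ)
    (hy : ∀ i, ∀ k ≤ ℓ, (y i).coeff k ∈ restrictTotalDegreeAtLeast σ R 1) :
    (∑ i, y i).coeff ℓ - ∑ i, (y i).coeff ℓ ∈ restrictTotalDegreeAtLeast σ R p := by
  induction ℓ using Nat.strong_induction_on with
  | _ ℓ ih =>
  have hz (k : ℕ) (hk : k < ℓ) :
      (∑ i, y i).coeff k ∈ restrictTotalDegreeAtLeast σ R 1 := by
    rw [← sub_add_cancel ((∑ i, y i).coeff k) (∑ i, (y i).coeff k)]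
    refine add_mem (restrictTotalDegreeAtLeast_antitone hp.out.one_le ?_)
      (sum_mem fun i _ => hy i k hk.le)
    exact ih k hk fun i j hj => hy i j (hj.trans hk.le)
  have hpow (k : ℕ) (hk : k < ℓ) (f : MvPolynomial σ R)
      (hf : f ∈ restrictTotalDegreeAtLeast σ R 1) :
      f ^ p ^ (ℓ - k) ∈ restrictTotalDegreeAtLeast σ R p :=
    restrictTotalDegreeAtLeast_antitone (by simpa using Nat.le_self_pow (by omega) p)
      (pow_mem_restrictTotalDegreeAtLeast hf _)
  have hpℓ : (p ^ ℓ : ℤ) ≠ 0 := pow_ne_zero ℓ (Int.natCast_ne_zero.2 hp.out.ne_zero)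
  refine (smul_mem_restrictSupport_iff hpℓ).1 ?_
  rw [prime_pow_smul_coeff_sum_sub_sum_coeff]
  refine sum_mem fun k hk => zsmul_mem (sub_mem (sum_mem fun i _ => ?_) ?_) _
  · exact hpow k (mem_range.1 hk) _ (hy i k (mem_range.1 hk).le)
  · exact hpow k (mem_range.1 hk) _ (hz k (mem_range.1 hk))

theorem coeff_sum_sub_sum_coeff_mem_supported (lvl : σ → ℕ)
    (y : ι → WittVector p (MvPolynomial σ R)) (ℓ : ℕ)
    (hy : ∀ i, ∀ k ≤ ℓ, (y i).coeff k ∈ supported R {v | lvl v ≤ k}) :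
    (∑ i, y i).coeff ℓ - ∑ i, (y i).coeff ℓ ∈ supported R {v | lvl v < ℓ} := by
  induction ℓ using Nat.strong_induction_on with
  | _ ℓ ih =>
  have hz (k : ℕ) (hk : k < ℓ) : (∑ i, y i).coeff k ∈ supported R {v | lvl v < ℓ} := by
    rw [← sub_add_cancel ((∑ i, y i).coeff k) (∑ i, (y i).coeff k)]
    refine add_mem (supported_mono (fun v (hv : lvl v < k) => hv.trans hk) ?_)
      (sum_mem fun i _ => supported_mono (fun v (hv : lvl v ≤ k) => hv.trans_lt hk)
        (hy i k hk.le))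
    exact ih k hk fun i j hj => hy i j (hj.trans hk.le)
  have hpℓ : (p ^ ℓ : ℤ) ≠ 0 := pow_ne_zero ℓ (Int.natCast_ne_zero.2 hp.out.ne_zero)
  refine (smul_mem_supported_iff hpℓ).1 ?_
  rw [prime_pow_smul_coeff_sum_sub_sum_coeff]
  refine sum_mem fun k hk =>
    zsmul_mem (sub_mem (sum_mem fun i _ => pow_mem ?_ _) (pow_mem ?_ _)) _
  · exact supported_mono (fun v (hv : lvl v ≤ k) => hv.trans_lt (mem_range.1 hk))
      (hy i k (mem_range.1 hk).le)
  · exact hz k (mem_range.1 hk)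

end WittVector

/-- Consider the universal sum of `p` Witt vectors of length `n`: over the
polynomial ring `ℤ[x_{ij} : 1 ≤ i ≤ p, 1 ≤ j ≤ n]`, let `x i` be the Witt vector with
coordinates `(x_{i1}, …, x_{in})` and `z = Σ_{i=1}^p x i`. Then for each coordinate `ℓ`
there is a polynomial `f_ℓ` involving only the variables `x_{ij}` with `j ≤ ℓ − 1`, all of
whose monomials have total degree `≥ p`, such that `z_ℓ = Σ_{i=1}^p x_{iℓ} + f_ℓ`. -/
theorem stmt4 (p n : ℕ) [Fact p.Prime]
    (x : Fin p → TruncatedWittVector p n (MvPolynomial (Fin p × Fin n) ℤ))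
    (hx : ∀ (i : Fin p) (j : Fin n), (x i).coeff j = X (i, j))
    (ℓ : Fin n) :
    ∃ f : MvPolynomial (Fin p × Fin n) ℤ,
      (∑ i, x i).coeff ℓ = (∑ i : Fin p, X (i, ℓ)) + f ∧
      (∀ m ∈ f.support, p ≤ m.sum fun _ e => e) ∧
      (∀ m ∈ f.support, ∀ v ∈ m.support, (v.2 : ℕ) < (ℓ : ℕ)) := by
  choose y hy using fun i => WittVector.truncate_surjective (p := p) n _ (x i)
  have hcoeff (i : Fin p) (k : Fin n) : (y i).coeff k = X (i, k) := by
    rw [← WittVector.coeff_truncate, hy, hx]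
  have hdeg := WittVector.coeff_sum_sub_sum_coeff_mem_restrictTotalDegreeAtLeast y ℓ
    fun i k hk => hcoeff i ⟨k, hk.trans_lt ℓ.isLt⟩ ▸ X_mem_restrictTotalDegreeAtLeast_one _
  have hvars := WittVector.coeff_sum_sub_sum_coeff_mem_supported (fun v => (v.2 : ℕ)) y ℓ
    fun i k hk =>
      hcoeff i ⟨k, hk.trans_lt ℓ.isLt⟩ ▸ (X_mem_supported (R := ℤ)).2 (le_refl k)
  refine ⟨(∑ i, y i).coeff ℓ - ∑ i, (y i).coeff ℓ, ?_, fun m hm => hdeg hm,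
    fun m hm v hv => mem_supported.1 hvars ((mem_vars_iff_mem_support v).2 ⟨m, hm, hv⟩)⟩
  simp only [← hy, ← map_sum, WittVector.coeff_truncate, hcoeff, add_sub_cancel]
end

section
/- Let L/K be a totally ramified cyclic extension of degree p of complete discrete valuation fields of characteristic 0 with residue characteristic p, and let e_K = v_K(p) be the absolute ramification index. For all a ∈ O_L, v_K(tr_{L/K}(a^p) − tr_{L/K}(a)^p) = e_K + v_L(a). -/
/-!
Write `G = Gal(L/K)`. Since `K` is complete, a valuation of `K` has at most one extension to `L`
(all of them agree with the spectral norm), so `w_L` is `G`-invariant. As `L/K` is totally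
ramified, `O_L = O_K + 𝔪_L`; together with `p ∈ 𝔪_K` this gives `tr(O_L) ⊆ 𝔪_K`, and after
scaling, `v_K(tr x) > v_K(c)` whenever `v_L(x) ≥ p · v_K(c)`.

Expand `tr(a)^p = (∑_σ σ a)^p` by the multinomial theorem and apply the trace. The exponent
vector `(1, …, 1)` contributes `p! · N(a)`, the vectors `p · e_σ` contribute `tr(a^p)`, and `G`
permutes the remaining exponent vectors freely, in orbits of size `p`. Each orbit contributes
`m · tr(∏_σ (σ a)^{k_σ})` where `p ∣ m` and the monomial has valuation `p · v_L(a) = p · v_K(N a)`,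
so its valuation exceeds `e_K + v_L(a) = v_K(p! · N(a))`.
-/

noncomputable section

/-- The value group `ℤₘ₀ = ℤ ∪ {0}` (multiplicative notation) of a normalized discrete
valuation. -/
abbrev Zm0 : Type := WithZero (Multiplicative ℤ)

/-- The element of `ℤₘ₀` corresponding to additive valuation value `-n`; an element `x` has
(additive, normalized) valuation `n` iff the multiplicative valuation satisfies
`w x = oa (-n)`. -/
def oa (n : ℤ) : Zm0 := (Multiplicative.ofAdd n : Multiplicative ℤ)

open WithZero Finset
open scoped NNReal

theorem Valuation.map_le_map_sum_of_injOn {R Γ₀ ι : Type*} [Ring R]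
    [LinearOrderedCommGroupWithZero Γ₀] (v : Valuation R Γ₀) {s : Finset ι} {f : ι → R}
    (hf : Set.InjOn (fun i => v (f i)) {i | i ∈ s ∧ f i ≠ 0}) {i : ι} (hi : i ∈ s) :
    v (f i) ≤ v (∑ j ∈ s, f j) := by
  classical
  obtain ⟨i₀, hi₀, hmax⟩ := s.exists_max_image (fun j => v (f j)) ⟨i, hi⟩
  rcases eq_or_ne (v (f i₀)) 0 with h0 | h0
  · exact (hmax i hi).trans (h0 ▸ zero_le)
  refine (hmax i hi).trans (v.map_sum_eq_of_lt hi₀ fun j hj => ?_).ge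
  obtain ⟨hjs, hji₀⟩ := mem_sdiff.1 hj
  refine (hmax j hjs).lt_of_ne fun hvj => hji₀ (mem_singleton.2 ?_)
  have hfj : f j ≠ 0 := fun h => h0 (by rw [← hvj, h, v.map_zero])
  exact hf ⟨hjs, hfj⟩ ⟨hi₀, fun h => h0 (by rw [h, v.map_zero])⟩ hvj

theorem Valuation.map_natCast_eq_one_of_not_dvd {R Γ₀ : Type*} [CommRing R]
    [LinearOrderedCommGroupWithZero Γ₀] (v : Valuation R Γ₀) {p : ℕ} (hp : p.Prime)
    (hv : v p < 1) {m : ℕ} (hm : ¬ p ∣ m) : v m = 1 := by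
  obtain ⟨u, w, huw⟩ : IsCoprime (m : ℤ) p :=
    Nat.isCoprime_iff_coprime.2 (Nat.coprime_comm.1 ((hp.coprime_iff_not_dvd).2 hm))
  have hint (z : ℤ) : v z ≤ 1 := (v.mem_integer_iff _).1 (intCast_mem v.integer z)
  refine le_antisymm ((v.mem_integer_iff _).1 (natCast_mem v.integer m)) (not_lt.1 fun hlt => ?_)
  have hsum : v (u * m + w * p) < 1 := by
    refine v.map_add_lt ?_ ?_ <;> rw [map_mul]
    · exact Right.mul_lt_one_of_le_of_lt (hint u) hlt
    · exact Right.mul_lt_one_of_le_of_lt (hint w) hv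
  have h1 : ((u * m + w * p : ℤ) : R) = 1 := by rw [huw, Int.cast_one]
  push_cast at h1
  rw [h1, map_one] at hsum
  exact lt_irrefl _ hsum

theorem Valuation.map_factorial_eq_of_prime {R Γ₀ : Type*} [CommRing R]
    [LinearOrderedCommGroupWithZero Γ₀] (v : Valuation R Γ₀) {p : ℕ} (hp : p.Prime)
    (hv : v p < 1) : v (p.factorial : R) = v p := by
  have hndvd : ¬ p ∣ (p - 1).factorial := fun h => by
    have := hp.dvd_factorial.1 h
    have := hp.pos
    omega
  rw [← Nat.mul_factorial_pred hp.ne_zero, Nat.cast_mul, map_mul,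
    v.map_natCast_eq_one_of_not_dvd hp hv hndvd, mul_one]

theorem Nat.Prime.dvd_multinomial {ι : Type*} {s : Finset ι} {p : ℕ} (hp : p.Prime)
    {k : ι → ℕ} (hk : ∑ i ∈ s, k i = p) (hlt : ∀ i ∈ s, k i < p) :
    p ∣ Nat.multinomial s k := by
  have h := Nat.multinomial_spec s k
  rw [hk] at h
  have hdvd : p ∣ (∏ i ∈ s, (k i).factorial) * Nat.multinomial s k :=
    h ▸ Nat.dvd_factorial hp.pos le_rfl
  refine (hp.prime.dvd_or_dvd hdvd).resolve_left fun hprod => ?_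
  obtain ⟨i, hi, hpi⟩ := hp.prime.exists_mem_finset_dvd hprod
  exact (hlt i hi).not_ge (hp.dvd_factorial.1 hpi)

theorem Finset.exists_sum_eq_card_nsmul_sum {G X M : Type*} [Group G] [Fintype G]
    [MulAction G X] [DecidableEq X] [AddCommMonoid M] (s : Finset X)
    (hs : ∀ (g : G), ∀ x ∈ s, g • x ∈ s) (hfree : ∀ (g : G), ∀ x ∈ s, g • x = x → g = 1)
    (F : X → M) (hF : ∀ (g : G) x, F (g • x) = F x) :
    ∃ t ⊆ s, ∑ x ∈ s, F x = Fintype.card G • ∑ x ∈ t, F x := by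
  induction s using Finset.strongInduction with
  | _ s ih =>
  rcases s.eq_empty_or_nonempty with rfl | ⟨x, hx⟩
  · exact ⟨∅, by simp⟩
  set O := univ.image (· • x : G → X)
  have hOs : O ⊆ s := by
    simp only [O, image_subset_iff]
    exact fun g _ => hs g x hx
  have hxO : x ∈ O := mem_image.2 ⟨1, mem_univ _, one_smul G x⟩
  have hcard : O.card = Fintype.card G := by
    refine card_image_of_injective _ fun g h hgh => ?_
    have : (h⁻¹ * g) • x = x := by rw [mul_smul, hgh, inv_smul_smul]
    exact (inv_mul_eq_one.1 (hfree _ x hx this)).symm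
  have hO : ∑ y ∈ O, F y = Fintype.card G • F x := by
    rw [← hcard, ← sum_const]
    refine sum_congr rfl fun y hy => ?_
    obtain ⟨g, -, rfl⟩ := mem_image.1 hy
    exact hF g x
  have hrest : ∀ (g : G), ∀ y ∈ s \ O, g • y ∈ s \ O := by
    intro g y hy
    obtain ⟨hys, hyO⟩ := mem_sdiff.1 hy
    refine mem_sdiff.2 ⟨hs g y hys, fun hgy => hyO ?_⟩
    obtain ⟨h, -, hh⟩ := mem_image.1 hgy
    exact mem_image.2 ⟨g⁻¹ * h, mem_univ _, by rw [mul_smul, hh, inv_smul_smul]⟩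
  obtain ⟨t, hts, ht⟩ := ih (s \ O) (sdiff_ssubset hOs ⟨x, hxO⟩) hrest
    (fun g y hy => hfree g y (mem_sdiff.1 hy).1)
  have hxt : x ∉ t := fun hxt => (mem_sdiff.1 (hts hxt)).2 hxO
  refine ⟨insert x t, insert_subset hx (hts.trans sdiff_subset), ?_⟩
  rw [← sum_sdiff hOs, ht, hO, sum_insert hxt, smul_add, add_comm]

section UniqueExtension

open WithZeroMulInt

theorem WithZeroMulInt.toNNReal_pow_base {e : ℝ≥0} (he : e ≠ 0) {n : ℕ} (hn : n ≠ 0)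
    (x : ℤᵐ⁰) : toNNReal (pow_ne_zero n he) x = toNNReal he (x ^ n) := by
  rcases eq_or_ne x 0 with rfl | hx
  · simp [zero_pow hn]
  rw [toNNReal_neg_apply _ hx, toNNReal_neg_apply _ (pow_ne_zero n hx), toAdd_unzero_eq_log,
    toAdd_unzero_eq_log, log_pow, ← zpow_natCast, ← zpow_mul, nsmul_eq_mul, mul_comm]

def Valuation.toAbsoluteValue {R : Type*} [Field R] (v : Valuation R ℤᵐ⁰) {e : ℝ≥0}
    (he : 1 < e) : AbsoluteValue R ℝ where
  toFun x := toNNReal he.ne_bot (v x)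
  map_mul' _ _ := by simp
  nonneg' _ := NNReal.coe_nonneg _
  eq_zero' _ := by simp
  add_le' x y := by
    have h := (toNNReal_strictMono he).monotone (v.map_add x y)
    rw [(toNNReal_strictMono he).monotone.map_max] at h
    exact_mod_cast h.trans (max_le_add_of_nonneg zero_le zero_le)

theorem Valuation.eq_of_comp_algebraMap_eq_pow {K L : Type*} [Field K] [Field L] [Algebra K L]
    [Algebra.IsAlgebraic K L] {n : ℕ} (hn : n ≠ 0) {wK : Valuation K ℤᵐ⁰} [wK.IsNontrivial]
    (hK : @CompleteSpace K (Valued.mk' wK).toUniformSpace) {v₁ v₂ : Valuation L ℤᵐ⁰}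
    (h₁ : ∀ c, v₁ (algebraMap K L c) = wK c ^ n) (h₂ : ∀ c, v₂ (algebraMap K L c) = wK c ^ n) :
    v₁ = v₂ := by
  have h2 : (1 : ℝ≥0) < 2 := one_lt_two
  let : Valued K ℤᵐ⁰ := Valued.mk' wK
  -- `‖c‖ = (2 ^ n) ^ log (wK c)`, extended by `x ↦ 2 ^ log (v x)` whenever `v` extends `wK ^ n`
  let : (Valued.v : Valuation K ℤᵐ⁰).RankOne :=
    { hom' := (toNNReal (pow_ne_zero n two_ne_zero)).comp MonoidWithZeroHom.ValueGroup₀.embedding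
      strictMono' := (toNNReal_strictMono (one_lt_pow₀ h2 hn)).comp
        MonoidWithZeroHom.ValueGroup₀.embedding_strictMono }
  let := Valued.toNontriviallyNormedField K ℤᵐ⁰
  have : CompleteSpace K := hK
  have hspectral (v : Valuation L ℤᵐ⁰) (hv : ∀ c, v (algebraMap K L c) = wK c ^ n) (x : L) :
      v.toAbsoluteValue h2 x = spectralNorm K L x := by
    refine spectralNorm_unique_field_norm_ext (fun c => ?_) x
    change (toNNReal two_ne_zero (v (algebraMap K L c)) : ℝ) =
      toNNReal (pow_ne_zero n two_ne_zero) (MonoidWithZeroHom.ValueGroup₀.embedding (wK.restrict c))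
    rw [Valuation.embedding_restrict, hv, toNNReal_pow_base two_ne_zero hn]
  ext x
  exact (toNNReal_strictMono h2).injective
    (NNReal.coe_injective ((hspectral v₁ h₁ x).trans (hspectral v₂ h₂ x).symm))

theorem Valuation.map_algEquiv_apply {K L : Type*} [Field K] [Field L] [Algebra K L]
    [Algebra.IsAlgebraic K L] {n : ℕ} (hn : n ≠ 0) {wK : Valuation K ℤᵐ⁰} [wK.IsNontrivial]
    (hK : @CompleteSpace K (Valued.mk' wK).toUniformSpace) {wL : Valuation L ℤᵐ⁰}
    (hext : ∀ c, wL (algebraMap K L c) = wK c ^ n) (τ : L ≃ₐ[K] L) (x : L) :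
    wL (τ x) = wL x := by
  have h := Valuation.eq_of_comp_algebraMap_eq_pow hn hK (v₂ := wL.comap (τ : L →+* L)) hext
    fun c => by simp [hext]
  exact (congrArg (· x) h).symm

end UniqueExtension

section TotallyRamified

variable {K L : Type*} [Field K] [Field L] [Algebra K L] {wK : Valuation K ℤᵐ⁰}
  {wL : Valuation L ℤᵐ⁰} {n : ℕ} {π : L}

theorem valuation_smul_pow_injective (hext : ∀ c, wL (algebraMap K L c) = wK c ^ n)
    (hπ : wL π = exp (-1)) {c d : K} (hc : c ≠ 0) (hd : d ≠ 0) {i j : ℕ} (hi : i < n)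
    (hj : j < n) (h : wL (c • π ^ i) = wL (d • π ^ j)) : i = j := by
  obtain ⟨k, hk⟩ : ∃ k : ℤ, wK c = exp k := ⟨_, (exp_log (wK.ne_zero_iff.2 hc)).symm⟩
  obtain ⟨l, hl⟩ : ∃ l : ℤ, wK d = exp l := ⟨_, (exp_log (wK.ne_zero_iff.2 hd)).symm⟩
  rw [Algebra.smul_def, Algebra.smul_def, map_mul, map_mul, hext, hext, hk, hl, map_pow,
    map_pow, hπ, ← exp_nsmul, ← exp_nsmul, ← exp_nsmul, ← exp_nsmul, ← exp_add, ← exp_add,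
    exp_inj] at h
  simp only [nsmul_eq_mul] at h
  rcases lt_trichotomy k l with hkl | rfl | hkl <;> nlinarith

theorem valuation_smul_pow_le_valuation_sum (hext : ∀ c, wL (algebraMap K L c) = wK c ^ n)
    (hπ : wL π = exp (-1)) (g : Fin n → K) (i : Fin n) :
    wL (g i • π ^ (i : ℕ)) ≤ wL (∑ j, g j • π ^ (j : ℕ)) := by
  refine wL.map_le_map_sum_of_injOn (f := fun j : Fin n => g j • π ^ (j : ℕ))
    (fun j hj k hk hjk => ?_) (mem_univ i)
  exact Fin.ext (valuation_smul_pow_injective hext hπ (left_ne_zero_of_smul hj.2)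
    (left_ne_zero_of_smul hk.2) j.2 k.2 hjk)

theorem linearIndependent_pow_of_valuation_eq_exp_neg_one
    (hext : ∀ c, wL (algebraMap K L c) = wK c ^ n) (hπ : wL π = exp (-1)) :
    LinearIndependent K (fun i : Fin n => π ^ (i : ℕ)) := by
  have hπ0 : π ≠ 0 := by rintro rfl; exact exp_ne_zero (hπ.symm.trans wL.map_zero)
  refine Fintype.linearIndependent_iff.2 fun g hg i => ?_
  have h := valuation_smul_pow_le_valuation_sum hext hπ g i
  rw [hg, map_zero, le_zero_iff, Valuation.zero_iff] at h
  exact (smul_eq_zero.1 h).resolve_right (pow_ne_zero _ hπ0)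

theorem exists_valuation_sub_algebraMap_lt_one [FiniteDimensional K L]
    (hn : Module.finrank K L = n) (hext : ∀ c, wL (algebraMap K L c) = wK c ^ n)
    (hπ : wL π = exp (-1)) {x : L} (hx : wL x ≤ 1) :
    ∃ c : K, wK c ≤ 1 ∧ wL (x - algebraMap K L c) < 1 := by
  have hn0 : 0 < n := hn ▸ Module.finrank_pos
  have : Nonempty (Fin n) := ⟨⟨0, hn0⟩⟩
  let b : Module.Basis (Fin n) K L := basisOfLinearIndependentOfCardEqFinrank
    (linearIndependent_pow_of_valuation_eq_exp_neg_one hext hπ) (by simp [hn])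
  have hb : ∀ i, b i = π ^ (i : ℕ) := fun i => by simp [b]
  set g := b.repr x
  have hxg : x = ∑ i, g i • π ^ (i : ℕ) := by simp_rw [← hb]; exact (b.sum_repr x).symm
  have hterm (i : Fin n) : wL (g i • π ^ (i : ℕ)) ≤ 1 :=
    (valuation_smul_pow_le_valuation_sum hext hπ g i).trans (hxg ▸ hx)
  let i₀ : Fin n := ⟨0, hn0⟩
  refine ⟨g i₀, ?_, ?_⟩
  · simpa [i₀, Algebra.smul_def, hext, pow_le_one_iff hn0.ne'] using hterm i₀
  have hsplit : x - algebraMap K L (g i₀) = ∑ i ∈ univ.erase i₀, g i • π ^ (i : ℕ) := by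
    rw [hxg, ← add_sum_erase _ _ (mem_univ i₀)]
    simp [i₀, Algebra.smul_def]
  rw [hsplit]
  -- a term of valuation exactly `1 = wL (1 • π ^ 0)` can only be the constant term
  refine wL.map_sum_lt one_ne_zero fun i hi => (hterm i).lt_of_ne fun h1 => ?_
  have hgi : g i ≠ 0 := by rintro hgi; simp [hgi] at h1
  refine ne_of_mem_erase hi (Fin.ext ?_)
  refine valuation_smul_pow_injective hext hπ hgi one_ne_zero i.2 hn0 ?_
  simpa [i₀] using h1

variable [FiniteDimensional K L] [IsGalois K L]

theorem valuation_trace_lt_one (hn : Module.finrank K L = n)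
    (hext : ∀ c, wL (algebraMap K L c) = wK c ^ n) (hπ : wL π = exp (-1))
    (hinv : ∀ (τ : L ≃ₐ[K] L) x, wL (τ x) = wL x) (hnK : wK n < 1) {x : L} (hx : wL x ≤ 1) :
    wK (Algebra.trace K L x) < 1 := by
  obtain ⟨c, hc, hxc⟩ := exists_valuation_sub_algebraMap_lt_one hn hext hπ hx
  have hn0 : n ≠ 0 := hn ▸ Module.finrank_pos.ne'
  have htr_c : wK (Algebra.trace K L (algebraMap K L c)) < 1 := by
    rw [Algebra.trace_algebraMap, hn, nsmul_eq_mul, map_mul]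
    exact mul_lt_one_of_lt_of_le hnK hc
  have htr_sub : wK (Algebra.trace K L (x - algebraMap K L c)) < 1 := by
    rw [← pow_lt_one_iff hn0, ← hext, trace_eq_sum_automorphisms]
    exact wL.map_sum_lt one_ne_zero fun τ _ => (hinv τ _).trans_lt hxc
  rw [← add_sub_cancel (algebraMap K L c) x, map_add]
  exact wK.map_add_lt htr_c htr_sub

theorem valuation_trace_lt (hn : Module.finrank K L = n)
    (hext : ∀ c, wL (algebraMap K L c) = wK c ^ n) (hπ : wL π = exp (-1))
    (hinv : ∀ (τ : L ≃ₐ[K] L) x, wL (τ x) = wL x) (hnK : wK n < 1) {c : K} (hc : c ≠ 0)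
    {x : L} (hx : wL x ≤ wK c ^ n) : wK (Algebra.trace K L x) < wK c := by
  have hcK : wK c ≠ 0 := wK.ne_zero_iff.2 hc
  have hx' : wL (c⁻¹ • x) ≤ 1 := by
    rw [Algebra.smul_def, map_mul, hext, map_inv₀, inv_pow]
    exact inv_mul_le_one_of_le₀ hx zero_le
  have h := valuation_trace_lt_one hn hext hπ hinv hnK hx'
  rw [map_smul, smul_eq_mul, map_mul, map_inv₀] at h
  exact (inv_mul_lt_one₀ (zero_lt_iff.2 hcK)).1 h

theorem valuation_norm (hn : Module.finrank K L = n)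
    (hext : ∀ c, wL (algebraMap K L c) = wK c ^ n)
    (hinv : ∀ (τ : L ≃ₐ[K] L) x, wL (τ x) = wL x) (x : L) :
    wK (Algebra.norm K x) = wL x := by
  refine (pow_left_inj (hn ▸ Module.finrank_pos.ne')).1 ?_
  rw [← hext, Algebra.norm_eq_prod_automorphisms, map_prod]
  simp_rw [hinv]
  rw [prod_const, card_univ, ← Nat.card_eq_fintype_card, IsGalois.card_aut_eq_finrank, hn]

end TotallyRamified

theorem eq_single_of_le_of_mem_piAntidiag {G : Type*} [Fintype G] [DecidableEq G] {n : ℕ}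
    {k : G → ℕ} (hk : k ∈ univ.piAntidiag n) {σ : G} (hσ : n ≤ k σ) : k = Pi.single σ n := by
  have hsum := (mem_piAntidiag.1 hk).1
  rw [← add_sum_erase _ _ (mem_univ σ)] at hsum
  have hrest : ∑ σ' ∈ univ.erase σ, k σ' = 0 := by omega
  funext σ'
  rcases eq_or_ne σ' σ with rfl | hσ'
  · rw [Pi.single_eq_same]; omega
  · rw [Pi.single_eq_of_ne hσ', ← sum_eq_zero_iff.1 hrest σ' (mem_erase.2 ⟨hσ', mem_univ _⟩)]

section ExponentVectors

attribute [local instance] arrowAction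

variable {G : Type*} [Group G]

theorem arrowAction_apply (τ : G) (k : G → ℕ) (σ : G) : (τ • k) σ = k (τ⁻¹ * σ) := rfl

variable [Fintype G]

theorem sum_arrowAction (τ : G) (k : G → ℕ) : ∑ σ, (τ • k) σ = ∑ σ, k σ :=
  Equiv.sum_comp (Equiv.mulLeft τ⁻¹) k

theorem multinomial_arrowAction (τ : G) (k : G → ℕ) :
    Nat.multinomial univ (τ • k) = Nat.multinomial univ k := by
  simp only [Nat.multinomial, sum_arrowAction]
  rw [← Equiv.prod_comp (Equiv.mulLeft τ⁻¹) fun σ => (k σ).factorial]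
  rfl

theorem eq_one_of_arrowAction_eq_self (hG : (Nat.card G).Prime) {k : G → ℕ}
    (hk : ∑ σ, k σ = Nat.card G) {τ : G} (hτ : τ ≠ 1) (h : τ • k = k) : k = 1 := by
  have : Fact (Nat.card G).Prime := ⟨hG⟩
  have hstab : MulAction.stabilizer G k = ⊤ :=
    (Subgroup.eq_bot_or_eq_top_of_prime_card _).resolve_left fun hbot =>
      hτ (Subgroup.mem_bot.1 (hbot ▸ MulAction.mem_stabilizer_iff.2 h))
  have hconst (σ : G) : k σ = k 1 := by
    have hσ : σ • k = k := MulAction.mem_stabilizer_iff.1 (hstab ▸ Subgroup.mem_top σ)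
    simpa only [arrowAction_apply, inv_mul_cancel] using (congrFun hσ σ).symm
  have hk1 : k 1 = 1 := by
    simp only [hconst, sum_const, card_univ, smul_eq_mul, ← Nat.card_eq_fintype_card] at hk
    exact (Nat.mul_eq_left hG.ne_zero).1 hk
  funext σ
  rw [hconst, hk1, Pi.one_apply]

variable [DecidableEq G]

variable (G) in
/-- The exponent vectors of the monomials of `(∑ σ, x σ) ^ n` other than `∏ σ, x σ` and the
`x σ ^ n`. -/
def mixedExponents (n : ℕ) : Finset (G → ℕ) := {k ∈ (univ.piAntidiag n).erase 1 | ∀ σ, k σ < n}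

theorem sum_piAntidiag_eq_one_add_single_add_mixed {M : Type*} [AddCommMonoid M] {n : ℕ}
    (hn : Fintype.card G = n) (hn1 : n ≠ 1) (Φ : (G → ℕ) → M) :
    ∑ k ∈ univ.piAntidiag n, Φ k =
      Φ 1 + ∑ σ, Φ (Pi.single σ n) + ∑ k ∈ mixedExponents G n, Φ k := by
  have hone : (1 : G → ℕ) ∈ univ.piAntidiag n := by simp [mem_piAntidiag, hn]
  have hpure : {k ∈ (univ.piAntidiag n).erase (1 : G → ℕ) | ¬ ∀ σ, k σ < n} =
      univ.image fun σ => (Pi.single σ n : G → ℕ) := by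
    ext k
    simp only [mem_filter, mem_erase, mem_image, mem_univ, true_and, not_forall, not_lt]
    constructor
    · rintro ⟨⟨-, hk⟩, σ, hσ⟩
      exact ⟨σ, (eq_single_of_le_of_mem_piAntidiag hk hσ).symm⟩
    · rintro ⟨σ, rfl⟩
      refine ⟨⟨fun h => hn1 ?_, ?_⟩, σ, by simp⟩
      · simpa using congrFun h σ
      · simp [mem_piAntidiag, sum_pi_single']
  have hn0 : n ≠ 0 := hn ▸ Fintype.card_ne_zero
  have hinj : ∀ σ ∈ univ, ∀ τ ∈ univ, (Pi.single σ n : G → ℕ) = Pi.single τ n → σ = τ :=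
    fun σ _ τ _ h => by_contra fun hne => hn0 (by simpa [Pi.single_eq_of_ne hne] using congrFun h σ)
  rw [mixedExponents, ← add_sum_erase _ _ hone,
    ← sum_filter_add_sum_filter_not _ fun k => ∀ σ, k σ < n, hpure, sum_image hinj, add_assoc,
    add_comm (∑ k ∈ _ with _, Φ k)]

theorem exists_sum_mixedExponents_eq_nsmul {M : Type*} [AddCommMonoid M] {p : ℕ}
    (hp : p.Prime) (hG : Nat.card G = p) (Φ : (G → ℕ) → M) (hΦ : ∀ (τ : G) k, Φ (τ • k) = Φ k) :
    ∃ T ⊆ mixedExponents G p, ∑ k ∈ mixedExponents G p, Φ k = p • ∑ k ∈ T, Φ k := by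
  have hstable : ∀ (τ : G), ∀ k ∈ mixedExponents G p, τ • k ∈ mixedExponents G p := by
    intro τ k hk
    obtain ⟨hk1, hkA⟩ := mem_erase.1 (mem_filter.1 hk).1
    refine mem_filter.2 ⟨mem_erase.2 ⟨fun h => hk1 ?_, ?_⟩, fun σ => (mem_filter.1 hk).2 _⟩
    · rw [← inv_smul_smul τ k, h]
      rfl
    · exact mem_piAntidiag.2
        ⟨(sum_arrowAction τ k).trans (mem_piAntidiag.1 hkA).1, fun _ _ => mem_univ _⟩
  have hfree : ∀ (τ : G), ∀ k ∈ mixedExponents G p, τ • k = k → τ = 1 := by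
    intro τ k hk h
    obtain ⟨hk1, hkA⟩ := mem_erase.1 (mem_filter.1 hk).1
    by_contra hτ
    exact hk1 (eq_one_of_arrowAction_eq_self (hG ▸ hp)
      ((mem_piAntidiag.1 hkA).1.trans hG.symm) hτ h)
  have hcard : Fintype.card G = p := by rwa [← Nat.card_eq_fintype_card]
  simpa only [hcard] using exists_sum_eq_card_nsmul_sum _ hstable hfree Φ hΦ

end ExponentVectors

section TraceIdentity

attribute [local instance] arrowAction

variable {K L : Type*} [Field K] [Field L] [Algebra K L] [FiniteDimensional K L]

theorem prod_pow_arrowAction (a : L) (τ : Gal(L/K)) (k : Gal(L/K) → ℕ) :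
    ∏ σ, σ a ^ (τ • k) σ = τ (∏ σ, σ a ^ k σ) := by
  simp only [map_prod, map_pow, arrowAction_apply]
  exact (Equiv.prod_comp (Equiv.mulLeft τ) _).symm.trans (by simp)

variable [IsGalois K L]

theorem valuation_multinomial_mul_trace_lt {wK : Valuation K ℤᵐ⁰} {wL : Valuation L ℤᵐ⁰}
    {p : ℕ} {π : L} (hdeg : Module.finrank K L = p)
    (hext : ∀ c, wL (algebraMap K L c) = wK c ^ p) (hπ : wL π = exp (-1))
    (hinv : ∀ (τ : L ≃ₐ[K] L) x, wL (τ x) = wL x) (hp0 : (p : K) ≠ 0) (hpK : wK p < 1)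
    {a : L} (ha : a ≠ 0) {t : Gal(L/K) → ℕ} (ht : ∑ σ, t σ = p)
    (hdvd : p ∣ Nat.multinomial univ t) :
    wK (Nat.multinomial univ t * Algebra.trace K L (∏ σ, σ a ^ t σ)) < wK p * wL a := by
  obtain ⟨q, hq⟩ := hdvd
  have hN := valuation_norm hdeg hext hinv a
  have hprod : wL (∏ σ, σ a ^ t σ) ≤ wK (Algebra.norm K a) ^ p := by
    simp only [map_prod, map_pow, hinv, prod_pow_eq_pow_sum, ht, hN, le_refl]
  have hq1 : wK (q : K) ≤ 1 := (wK.mem_integer_iff _).1 (natCast_mem wK.integer q)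
  have hNa : wK (Algebra.norm K a) ≠ 0 := hN ▸ (wL.ne_zero_iff.2 ha)
  rw [hq, Nat.cast_mul, map_mul, map_mul, ← hN]
  exact mul_lt_mul_of_le_of_lt_of_nonneg_of_pos (mul_le_of_le_one_right' hq1)
    (valuation_trace_lt hdeg hext hπ hinv hpK (wK.ne_zero_iff.1 hNa) hprod) zero_le
    (zero_lt_iff.2 (wK.ne_zero_iff.2 hp0))

variable [DecidableEq Gal(L/K)]

theorem finrank_mul_trace_pow (a : L) (m : ℕ) :
    Module.finrank K L * Algebra.trace K L a ^ m = ∑ k ∈ univ.piAntidiag m,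
      (Nat.multinomial univ k : K) * Algebra.trace K L (∏ σ : Gal(L/K), σ a ^ k σ) := by
  rw [← nsmul_eq_mul, ← Algebra.trace_algebraMap (S := L), map_pow, trace_eq_sum_automorphisms,
    sum_pow_eq_sum_piAntidiag, map_sum]
  simp only [← nsmul_eq_mul, map_nsmul]

theorem exists_trace_pow_eq {p : ℕ} (hp : p.Prime) (hdeg : Module.finrank K L = p)
    (hp0 : (p : K) ≠ 0) (a : L) :
    ∃ T : Finset (Gal(L/K) → ℕ), (∀ t ∈ T, ∑ σ, t σ = p ∧ p ∣ Nat.multinomial univ t) ∧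
      Algebra.trace K L a ^ p = p.factorial * Algebra.norm K a + Algebra.trace K L (a ^ p) +
        ∑ t ∈ T, (Nat.multinomial univ t : K) * Algebra.trace K L (∏ σ, σ a ^ t σ) := by
  have hcard : Nat.card Gal(L/K) = p := (IsGalois.card_aut_eq_finrank K L).trans hdeg
  have hcard' : Fintype.card Gal(L/K) = p := by rw [← Nat.card_eq_fintype_card, hcard]
  set Φ : (Gal(L/K) → ℕ) → K :=
    fun k => Nat.multinomial univ k * Algebra.trace K L (∏ σ, σ a ^ k σ)
  have hΦone : Φ 1 = p.factorial * (p * Algebra.norm K a) := by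
    have hmult : Nat.multinomial univ (1 : Gal(L/K) → ℕ) = p.factorial := by
      simpa [hcard'] using Nat.multinomial_spec univ (1 : Gal(L/K) → ℕ)
    simp only [Φ, hmult, Pi.one_apply, pow_one, ← Algebra.norm_eq_prod_automorphisms,
      Algebra.trace_algebraMap, hdeg, nsmul_eq_mul]
  have hΦsingle (σ : Gal(L/K)) : Φ (Pi.single σ p) = Algebra.trace K L (a ^ p) := by
    simp only [Φ, Nat.multinomial_single, Nat.cast_one, one_mul]
    rw [Fintype.prod_eq_single σ fun σ' hσ' => by rw [Pi.single_eq_of_ne hσ', pow_zero],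
      Pi.single_eq_same, ← map_pow, Algebra.trace_eq_of_algEquiv]
  obtain ⟨T, hTR, hT⟩ := exists_sum_mixedExponents_eq_nsmul hp hcard Φ fun τ k => by
    simp only [Φ, multinomial_arrowAction, prod_pow_arrowAction, Algebra.trace_eq_of_algEquiv]
  refine ⟨T, fun t ht => ?_, mul_left_cancel₀ hp0 ?_⟩
  · obtain ⟨htA, hlt⟩ := mem_filter.1 (hTR ht)
    have hsum := (mem_piAntidiag.1 (mem_erase.1 htA).2).1
    exact ⟨hsum, hp.dvd_multinomial hsum fun σ _ => hlt σ⟩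
  have hexpand := finrank_mul_trace_pow (K := K) a p
  rw [hdeg, sum_piAntidiag_eq_one_add_single_add_mixed hcard' hp.one_lt.ne' Φ, hT, hΦone]
    at hexpand
  simp only [hexpand, hΦsingle, sum_const, card_univ, hcard', nsmul_eq_mul]
  ring

end TraceIdentity

theorem stmt9_general (p : ℕ) (hp : p.Prime) (K L : Type) [Field K] [Field L] [Algebra K L]
    [IsGalois K L] [FiniteDimensional K L]
    (hdeg : Module.finrank K L = p)
    (wK : Valuation K Zm0) (wL : Valuation L Zm0)
    (hwK : Function.Surjective wK) (hwL : Function.Surjective wL)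
    (hKcomplete : @CompleteSpace K (Valued.mk' wK).toUniformSpace)
    (hext : ∀ x : K, wL (algebraMap K L x) = wK x ^ p)
    -- residue characteristic `p`, with absolute ramification index `e_K = v_K(p) ≥ 1`
    (eK : ℤ) (heKpos : 0 < eK) (heK : wK (p : K) = oa (-eK)) :
    ∀ a : L, wL a ≤ 1 →
      wK (Algebra.trace K L (a ^ p) - Algebra.trace K L a ^ p) = oa (-eK) * wL a := by
  classical
  intro a _
  have hp0 : (p : K) ≠ 0 := wK.ne_zero_iff.1 (heK ▸ exp_ne_zero)
  have hpK : wK p < 1 := heK ▸ exp_lt_exp.2 (neg_neg_of_pos heKpos)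
  have : wK.IsNontrivial := ⟨(hwK (exp (-1))).imp fun _ hx => by simp [hx]⟩
  have hinv := Valuation.map_algEquiv_apply hp.ne_zero hKcomplete hext
  obtain ⟨π, hπ⟩ := hwL (exp (-1))
  rcases eq_or_ne a 0 with rfl | ha
  · simp [zero_pow hp.ne_zero]
  obtain ⟨T, hT, hid⟩ := exists_trace_pow_eq hp hdeg hp0 a
  have hmain : wK (p.factorial * Algebra.norm K a) = wK p * wL a := by
    rw [map_mul, wK.map_factorial_eq_of_prime hp hpK, valuation_norm hdeg hext hinv]
  have hrest : wK (∑ t ∈ T, (Nat.multinomial univ t : K) *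
      Algebra.trace K L (∏ σ, σ a ^ t σ)) < wK (p.factorial * Algebra.norm K a) :=
    hmain ▸ wK.map_sum_lt (mul_ne_zero (wK.ne_zero_iff.2 hp0) (wL.ne_zero_iff.2 ha)) fun t ht =>
      valuation_multinomial_mul_trace_lt hdeg hext hπ hinv hp0 hpK ha (hT t ht).1 (hT t ht).2
  rw [hid, show ∀ x y z : K, y - (x + y + z) = -(x + z) from fun _ _ _ => by ring,
    Valuation.map_neg, wK.map_add_eq_of_lt_left hrest, hmain, heK]

/-- Hesselholt, Lemma 2.2. Let `L/K` be a totally ramified cyclic extension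
of degree `p` of complete discrete valuation fields of characteristic `0` and residue
characteristic `p`, with `e_K = v_K(p)`. Then for all `a ∈ O_L`,
`v_K(tr_{L/K}(a^p) − tr_{L/K}(a)^p) = e_K + v_L(a)`. In multiplicative notation this reads
`wK(tr(a^p) − (tr a)^p) = oa (-e_K) · wL a`. -/
theorem stmt9 (p : ℕ) (hp : p.Prime) (K L : Type) [Field K] [Field L] [Algebra K L]
    [CharZero K] [IsGalois K L] [FiniteDimensional K L] [IsCyclic (L ≃ₐ[K] L)]
    (hdeg : Module.finrank K L = p)
    (wK : Valuation K Zm0) (wL : Valuation L Zm0)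
    (hwK : Function.Surjective wK) (hwL : Function.Surjective wL)
    (hKcomplete : @CompleteSpace K (Valued.mk' wK).toUniformSpace)
    (hLcomplete : @CompleteSpace L (Valued.mk' wL).toUniformSpace)
    (hext : ∀ x : K, wL (algebraMap K L x) = wK x ^ p)
    -- residue characteristic `p`, with absolute ramification index `e_K = v_K(p) ≥ 1`
    (eK : ℤ) (heKpos : 0 < eK) (heK : wK (p : K) = oa (-eK)) :
    ∀ a : L, wL a ≤ 1 →
      wK (Algebra.trace K L (a ^ p) - Algebra.trace K L a ^ p) = oa (-eK) * wL a :=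
  stmt9_general p hp K L hdeg wK wL hwK hwL hKcomplete hext eK heKpos heK
end
end

section
/- Let L/K be a totally ramified cyclic extension of degree p with ramification break s, G = Gal(L/K). If x ∈ O_L satisfies tr_{L/K}(x) = 0 and x represents a nonzero class in H^1(G, O_L) ≅ O_L^{tr=0}/(σ−1)O_L, then v_L(x) ≤ s−1. Equivalently, any trace-zero element x with v_L(x) ≥ s lies in (σ−1)O_L. -/
noncomputable section

/-!
By additive Hilbert 90, `x = σ y - y` for some `y ∈ L`. As `L/K` is totally ramified of degree
`p`, every `y` is `∑_{j<p} c_j π^j` with `c_j ∈ K`, and the valuations of the nonzero terms are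
pairwise distinct modulo `p`, so the valuation of such a sum is the largest one of its terms.
With `w = σπ/π` we have `σ(c π^j) - c π^j = c π^j (w^j - 1)`, and `v_L(w^j - 1) = v_L(w - 1)`
for `0 < j < p` because `j` is a unit; since `O_L = O_K[π]`, the break gives `v_L(w - 1) = s`.
Hence `v_L(σ y - y) = s + min_{j ≠ 0} v_L(c_j π^j)`, so `v_L(x) ≥ s` makes every term with
`j ≠ 0` integral, and `y - c_0` is an integral solution.
-/
open Finset

theorem oa_le_oa {m n : ℤ} : oa m ≤ oa n ↔ m ≤ n := by
  simp [oa, Multiplicative.ofAdd_le]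

theorem oa_lt_oa {m n : ℤ} : oa m < oa n ↔ m < n := by
  simp [oa, Multiplicative.ofAdd_lt]

theorem oa_injective : Function.Injective oa := fun _ _ h =>
  le_antisymm (oa_le_oa.mp h.le) (oa_le_oa.mp h.ge)

theorem oa_ne_zero (n : ℤ) : oa n ≠ 0 := WithZero.coe_ne_zero

theorem oa_zero : oa 0 = 1 := rfl

theorem oa_add (m n : ℤ) : oa (m + n) = oa m * oa n := rfl

theorem oa_pow (m : ℤ) (k : ℕ) : oa m ^ k = oa (k * m) := by
  simp [oa, ← WithZero.coe_pow, ← ofAdd_nsmul]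

theorem exists_oa_eq {x : Zm0} (h : x ≠ 0) : ∃ n : ℤ, oa n = x := by
  obtain ⟨a, rfl⟩ := WithZero.ne_zero_iff_exists.mp h
  exact ⟨Multiplicative.toAdd a, rfl⟩

theorem ne_zero_of_valuation_eq_oa {R : Type*} [Ring R] {v : Valuation R Zm0} {x : R} {n : ℤ}
    (h : v x = oa n) : x ≠ 0 :=
  fun hx => oa_ne_zero n (by rw [← h, hx, map_zero])

theorem le_oa_neg_one_of_lt_one {x : Zm0} (h : x < 1) : x ≤ oa (-1) := by
  rcases eq_or_ne x 0 with rfl | hx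
  · exact zero_le
  · obtain ⟨n, rfl⟩ := exists_oa_eq hx
    exact oa_le_oa.mpr (by have := oa_lt_oa.mp (h.trans_eq oa_zero.symm); omega)

namespace Valuation

variable {R Γ₀ : Type*} [CommRing R] [LinearOrderedCommGroupWithZero Γ₀] (v : Valuation R Γ₀)

theorem map_natCast_le_one (n : ℕ) : v n ≤ 1 := by
  induction n with
  | zero => simp
  | succ n ih =>
    rw [Nat.cast_succ]
    exact (v.map_add _ _).trans (max_le ih v.map_one.le)

theorem map_intCast_le_one (n : ℤ) : v n ≤ 1 := by
  obtain ⟨n, rfl | rfl⟩ := n.eq_nat_or_neg <;> simp [v.map_natCast_le_one]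

theorem map_natCast_eq_one_of_not_dvd_s15 {p : ℕ} (hp : p.Prime) (hvp : v p < 1) {n : ℕ}
    (hn : ¬ p ∣ n) : v n = 1 := by
  obtain ⟨a, b, hab⟩ :=
    Nat.isCoprime_iff_coprime.mpr (Nat.coprime_comm.mp (hp.coprime_iff_not_dvd.mpr hn))
  have hbezout : (a : R) * n = 1 - b * p := by
    rw [eq_sub_iff_add_eq]
    exact_mod_cast congrArg (Int.cast : ℤ → R) hab
  have han : v a * v n = 1 := by
    rw [← map_mul, hbezout, v.map_one_sub_of_lt]
    exact (v.map_mul _ _).trans_lt ((mul_le_of_le_one_left' (v.map_intCast_le_one b)).trans_lt hvp)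
  refine le_antisymm (v.map_natCast_le_one n) ?_
  calc 1 = v a * v n := han.symm
    _ ≤ v n := mul_le_of_le_one_left' (v.map_intCast_le_one a)

theorem map_pow_sub_one_le {w : R} (hw : v w ≤ 1) (n : ℕ) : v (w ^ n - 1) ≤ v (w - 1) := by
  rw [← geom_sum_mul, map_mul]
  refine mul_le_of_le_one_left' (v.map_sum_le fun i _ => ?_)
  rw [map_pow]
  exact pow_le_one' hw i

theorem map_pow_sub_one_eq {w : R} (hw : v (w - 1) < 1) {n : ℕ} (hn : v n = 1) :
    v (w ^ n - 1) = v (w - 1) := by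
  have hw1 : v w = 1 := by simpa using v.map_eq_of_sub_lt (x := 1) (y := w) (by simpa using hw)
  have hgeom : v (∑ i ∈ range n, w ^ i) = 1 := by
    have hsplit : ∑ i ∈ range n, w ^ i = n + ∑ i ∈ range n, (w ^ i - 1) := by
      simp [sum_sub_distrib]
    have hsmall : v (∑ i ∈ range n, (w ^ i - 1)) < v n :=
      hn ▸ (v.map_sum_le fun i _ => v.map_pow_sub_one_le hw1.le i).trans_lt hw
    rw [hsplit, v.map_add_eq_of_lt_left hsmall, hn]
  rw [← geom_sum_mul, map_mul, hgeom, one_mul]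

theorem map_le_map_sum {ι : Type*} {s : Finset ι} {f : ι → R}
    (hf : ∀ i ∈ s, ∀ j ∈ s, v (f i) = v (f j) → v (f i) ≠ 0 → i = j) {i : ι} (hi : i ∈ s) :
    v (f i) ≤ v (∑ j ∈ s, f j) := by
  classical
  obtain ⟨k, hk, hmax⟩ := s.exists_max_image (fun j => v (f j)) ⟨i, hi⟩
  rcases eq_or_ne (v (f k)) 0 with h0 | h0
  · exact (hmax i hi).trans (h0 ▸ zero_le)
  rw [v.map_sum_eq_of_lt hk fun j hj => ?_]
  · exact hmax i hi
  obtain ⟨hjs, hjk⟩ := mem_sdiff.mp hj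
  exact (hmax j hjs).lt_of_ne fun h => hjk (mem_singleton.mpr (hf j hjs k hk h (h ▸ h0)))

end Valuation

section CyclicGalois

theorem exists_eq_sub_of_sum_pow_eq_zero {R S : Type*} [CommSemiring R] [CommRing S] [Algebra R S]
    (σ : S ≃ₐ[R] S) {n : ℕ} {θ z : S} (hθ : ∑ i ∈ range n, (σ ^ i) θ = 1)
    (hz : ∑ i ∈ range n, (σ ^ i) z = 0) : ∃ y, z = σ y - y := by
  have hσpow : ∀ (i : ℕ) (a : S), σ ((σ ^ i) a) = (σ ^ (i + 1)) a := fun i a => by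
    rw [pow_succ']; rfl
  set partialSum : ℕ → S := fun i => ∑ j ∈ range i, (σ ^ j) z
  have hpartialSum : ∀ i, σ (partialSum i) = partialSum (i + 1) - z := fun i => by
    simp only [partialSum, map_sum, hσpow, sum_range_succ' _ i, pow_zero, AlgEquiv.one_apply,
      add_sub_cancel_right]
  set f : ℕ → S := fun i => partialSum i * (σ ^ i) θ
  have hσθ : ∑ i ∈ range n, (σ ^ (i + 1)) θ = 1 := by
    simp only [← hσpow, ← map_sum, hθ, map_one]
  have htelescope : ∑ i ∈ range n, f (i + 1) - ∑ i ∈ range n, f i = 0 := by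
    rw [← sum_sub_distrib, sum_range_sub]
    simp only [f, partialSum, hz, range_zero, sum_empty, zero_mul, sub_zero]
  have hσf : σ (∑ i ∈ range n, f i) = ∑ i ∈ range n, (f (i + 1) - z * (σ ^ (i + 1)) θ) := by
    simp only [f, map_sum, map_mul, hpartialSum, hσpow, sub_mul]
  refine ⟨-∑ i ∈ range n, f i, ?_⟩
  rw [map_neg, hσf, sum_sub_distrib, ← mul_sum, hσθ]
  linear_combination htelescope

variable {K L : Type*} [Field K] [Field L] [Algebra K L] [FiniteDimensional K L] [IsGalois K L]
  {σ : L ≃ₐ[K] L}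

theorem algebraMap_trace_eq_sum_pow (hσ : ∀ τ : L ≃ₐ[K] L, τ ∈ Subgroup.zpowers σ) (x : L) :
    algebraMap K L (Algebra.trace K L x) = ∑ i ∈ range (orderOf σ), (σ ^ i) x := by
  classical
  rw [trace_eq_sum_automorphisms, ← IsCyclic.image_range_orderOf hσ, sum_image]
  exact fun i hi j hj h => pow_injOn_Iio_orderOf (by simpa using hi) (by simpa using hj) h

theorem exists_eq_sub_of_trace_eq_zero (hσ : ∀ τ : L ≃ₐ[K] L, τ ∈ Subgroup.zpowers σ) {z : L}
    (hz : Algebra.trace K L z = 0) : ∃ y, z = σ y - y := by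
  obtain ⟨θ, hθ⟩ := Algebra.trace_surjective K L 1
  refine exists_eq_sub_of_sum_pow_eq_zero σ (n := orderOf σ) (θ := θ) ?_ ?_
  · rw [← algebraMap_trace_eq_sum_pow hσ, hθ, map_one]
  · rw [← algebraMap_trace_eq_sum_pow hσ, hz, map_zero]

end CyclicGalois

section TotallyRamified

variable {K L : Type*} [Field K] [Field L] [Algebra K L] {p : ℕ}
  {wK : Valuation K Zm0} {wL : Valuation L Zm0} {π : L}

theorem valuation_algebraMap_mul_pow (hext : ∀ x : K, wL (algebraMap K L x) = wK x ^ p)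
    (hπ : wL π = oa (-1)) {c : K} (hc : c ≠ 0) (j : ℕ) :
    ∃ m : ℤ, wL (algebraMap K L c * π ^ j) = oa (p * m - j) := by
  obtain ⟨m, hm⟩ := exists_oa_eq ((wK.ne_zero_iff).mpr hc)
  refine ⟨m, ?_⟩
  rw [map_mul, map_pow, hext, hπ, ← hm, oa_pow, oa_pow, ← oa_add]
  congr 1
  ring

theorem eq_of_valuation_algebraMap_mul_pow_eq (hext : ∀ x : K, wL (algebraMap K L x) = wK x ^ p)
    (hπ : wL π = oa (-1)) {c d : K} {i j : ℕ} (hi : i < p) (hj : j < p)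
    (h : wL (algebraMap K L c * π ^ i) = wL (algebraMap K L d * π ^ j))
    (h0 : wL (algebraMap K L c * π ^ i) ≠ 0) : i = j := by
  have hc : c ≠ 0 := by rintro rfl; simp at h0
  have hd : d ≠ 0 := by rintro rfl; simp [h] at h0
  obtain ⟨m, hm⟩ := valuation_algebraMap_mul_pow hext hπ hc i
  obtain ⟨n, hn⟩ := valuation_algebraMap_mul_pow hext hπ hd j
  have hmn : (i : ℤ) - j = p * (m - n) := by
    have := oa_injective (hm.symm.trans (h.trans hn))
    linear_combination -this
  have := Int.eq_zero_of_abs_lt_dvd ⟨m - n, hmn⟩ (by rw [abs_lt]; omega)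
  omega

theorem valuation_le_valuation_sum_algebraMap_mul_pow
    (hext : ∀ x : K, wL (algebraMap K L x) = wK x ^ p) (hπ : wL π = oa (-1)) (g : Fin p → K)
    (j : Fin p) :
    wL (algebraMap K L (g j) * π ^ (j : ℕ)) ≤ wL (∑ i, algebraMap K L (g i) * π ^ (i : ℕ)) :=
  wL.map_le_map_sum (fun i _ k _ h h0 =>
    Fin.ext (eq_of_valuation_algebraMap_mul_pow_eq hext hπ i.isLt k.isLt h h0)) (mem_univ j)

theorem linearIndependent_pow_of_valuation_eq (hext : ∀ x : K, wL (algebraMap K L x) = wK x ^ p)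
    (hπ : wL π = oa (-1)) : LinearIndependent K (fun j : Fin p => π ^ (j : ℕ)) := by
  have hπ0 : π ≠ 0 := ne_zero_of_valuation_eq_oa hπ
  rw [Fintype.linearIndependent_iff]
  intro g hg j
  have hle := valuation_le_valuation_sum_algebraMap_mul_pow hext hπ g j
  simp only [← Algebra.smul_def, hg, map_zero, le_zero_iff, map_eq_zero, smul_eq_zero] at hle
  exact hle.resolve_right (pow_ne_zero _ hπ0)

theorem exists_eq_sum_algebraMap_mul_pow [FiniteDimensional K L]
    (hext : ∀ x : K, wL (algebraMap K L x) = wK x ^ p) (hπ : wL π = oa (-1))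
    (hdeg : Module.finrank K L = p) (a : L) :
    ∃ g : Fin p → K, a = ∑ j, algebraMap K L (g j) * π ^ (j : ℕ) := by
  have hspan := (linearIndependent_pow_of_valuation_eq hext hπ).span_eq_top_of_card_eq_finrank'
    (by simp [hdeg])
  obtain ⟨g, hg⟩ :=
    (Submodule.mem_span_range_iff_exists_fun K).mp (hspan ▸ Submodule.mem_top (x := a))
  exact ⟨g, by simp only [← hg, Algebra.smul_def]⟩

theorem valuation_natCast_eq_one (hext : ∀ x : K, wL (algebraMap K L x) = wK x ^ p)
    (hp : p.Prime) (hres : wK p < 1) {j : ℕ} (hj0 : 0 < j) (hjp : j < p) : wL (j : L) = 1 := by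
  rw [← map_natCast (algebraMap K L), hext,
    wK.map_natCast_eq_one_of_not_dvd_s15 hp hres (Nat.not_dvd_of_pos_of_lt hj0 hjp), one_pow]

end TotallyRamified

section RamificationBreak

variable {K L : Type*} [Field K] [Field L] [Algebra K L] {p : ℕ}
  {wK : Valuation K Zm0} {wL : Valuation L Zm0} {π : L} (σ : L ≃ₐ[K] L)

theorem sub_sum_algebraMap_mul_pow (hπ0 : π ≠ 0) (g : Fin p → K) :
    σ (∑ j, algebraMap K L (g j) * π ^ (j : ℕ)) - ∑ j, algebraMap K L (g j) * π ^ (j : ℕ) =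
      ∑ j, algebraMap K L (g j) * π ^ (j : ℕ) * ((σ π / π) ^ (j : ℕ) - 1) := by
  rw [map_sum, ← sum_sub_distrib]
  refine sum_congr rfl fun j _ => ?_
  rw [map_mul, map_pow, σ.commutes, ← mul_sub, div_pow, mul_sub_one, mul_assoc,
    mul_div_cancel₀ _ (pow_ne_zero _ hπ0), mul_sub]

theorem valuation_mul_div_pow_sub_one (hunit : ∀ j, 0 < j → j < p → wL (j : L) = 1)
    (hδ : wL (σ π / π - 1) < 1) (x : L) {j : ℕ} (hj0 : j ≠ 0) (hjp : j < p) :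
    wL (x * ((σ π / π) ^ j - 1)) = wL x * wL (σ π / π - 1) := by
  rw [map_mul, wL.map_pow_sub_one_eq hδ (hunit j (Nat.pos_of_ne_zero hj0) hjp)]

theorem valuation_mul_le_valuation_sub_sum (hext : ∀ x : K, wL (algebraMap K L x) = wK x ^ p)
    (hπ : wL π = oa (-1)) (hunit : ∀ j, 0 < j → j < p → wL (j : L) = 1)
    (hδ : wL (σ π / π - 1) < 1) (g : Fin p → K) {j : Fin p} (hj : (j : ℕ) ≠ 0) :
    wL (algebraMap K L (g j) * π ^ (j : ℕ)) * wL (σ π / π - 1) ≤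
      wL (σ (∑ i, algebraMap K L (g i) * π ^ (i : ℕ)) -
        ∑ i, algebraMap K L (g i) * π ^ (i : ℕ)) := by
  have hπ0 : π ≠ 0 := ne_zero_of_valuation_eq_oa hπ
  have hzero : ∀ i : Fin p, (i : ℕ) = 0 → (σ π / π) ^ (i : ℕ) - 1 = 0 := fun i hi => by
    rw [hi, pow_zero, sub_self]
  rw [sub_sum_algebraMap_mul_pow σ hπ0, ← valuation_mul_div_pow_sub_one σ hunit hδ _ hj j.isLt]
  refine wL.map_le_map_sum
    (f := fun i => algebraMap K L (g i) * π ^ (i : ℕ) * ((σ π / π) ^ (i : ℕ) - 1))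
    (fun i _ k _ h h0 => ?_) (mem_univ j)
  have hi : (i : ℕ) ≠ 0 := fun hi => h0 (by rw [hzero i hi, mul_zero, map_zero])
  have hk : (k : ℕ) ≠ 0 := fun hk => h0 (by rw [h, hzero k hk, mul_zero, map_zero])
  rw [valuation_mul_div_pow_sub_one σ hunit hδ _ hi i.isLt,
    valuation_mul_div_pow_sub_one σ hunit hδ _ hk k.isLt] at h
  rw [valuation_mul_div_pow_sub_one σ hunit hδ _ hi i.isLt] at h0
  exact Fin.ext (eq_of_valuation_algebraMap_mul_pow_eq hext hπ i.isLt k.isLt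
    (mul_right_cancel₀ (right_ne_zero_of_mul h0) h) (left_ne_zero_of_mul h0))

theorem valuation_sub_sum_le (hext : ∀ x : K, wL (algebraMap K L x) = wK x ^ p)
    (hπ : wL π = oa (-1)) (hunit : ∀ j, 0 < j → j < p → wL (j : L) = 1)
    (hδ : wL (σ π / π - 1) < 1) (g : Fin p → K)
    (ha : wL (∑ i, algebraMap K L (g i) * π ^ (i : ℕ)) ≤ 1) :
    wL (σ (∑ i, algebraMap K L (g i) * π ^ (i : ℕ)) - ∑ i, algebraMap K L (g i) * π ^ (i : ℕ)) ≤
      oa (-1) * wL (σ π / π - 1) := by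
  have hπ0 : π ≠ 0 := ne_zero_of_valuation_eq_oa hπ
  rw [sub_sum_algebraMap_mul_pow σ hπ0]
  refine wL.map_sum_le fun i _ => ?_
  rcases eq_or_ne (i : ℕ) 0 with hi | hi
  · simp [hi]
  rw [valuation_mul_div_pow_sub_one σ hunit hδ _ hi i.isLt]
  refine mul_le_mul_left (le_oa_neg_one_of_lt_one (lt_of_le_of_ne
    ((valuation_le_valuation_sum_algebraMap_mul_pow hext hπ g i).trans ha) fun h => hi ?_)) _
  -- a term of valuation `1` would collide with the constant term `1 * π ^ 0`
  exact eq_of_valuation_algebraMap_mul_pow_eq hext hπ (d := 1) (j := 0) i.isLt i.pos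
    (by simpa using h) (by simp [h])

theorem valuation_div_sub_one_eq_of_break [FiniteDimensional K L]
    (hext : ∀ x : K, wL (algebraMap K L x) = wK x ^ p) (hπ : wL π = oa (-1))
    (hdeg : Module.finrank K L = p) (hunit : ∀ j, 0 < j → j < p → wL (j : L) = 1)
    {s : ℤ} (hs : 0 < s) (hle : ∀ a : L, wL a ≤ 1 → wL (σ a - a) ≤ oa (-(s + 1)))
    (heq : ∃ a : L, wL a ≤ 1 ∧ wL (σ a - a) = oa (-(s + 1))) :
    wL (σ π / π - 1) = oa (-s) := by
  have hπ0 : π ≠ 0 := ne_zero_of_valuation_eq_oa hπ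
  have hsplit : oa (-(s + 1)) = oa (-s) * oa (-1) := by rw [← oa_add]; ring_nf
  have hupper : wL (σ π / π - 1) ≤ oa (-s) := by
    have h := hle π (by rw [hπ, ← oa_zero, oa_le_oa]; omega)
    rw [show σ π - π = (σ π / π - 1) * π by rw [sub_mul, div_mul_cancel₀ _ hπ0, one_mul],
      map_mul, hπ, hsplit] at h
    exact (mul_le_mul_iff_left₀ (zero_lt_iff.mpr (oa_ne_zero _))).mp h
  have hδ : wL (σ π / π - 1) < 1 := hupper.trans_lt (by rw [← oa_zero, oa_lt_oa]; omega)
  obtain ⟨a, ha, hσa⟩ := heq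
  obtain ⟨g, rfl⟩ := exists_eq_sum_algebraMap_mul_pow hext hπ hdeg a
  have hlower := valuation_sub_sum_le σ hext hπ hunit hδ g ha
  rw [hσa, hsplit, mul_comm] at hlower
  exact hupper.antisymm ((mul_le_mul_iff_right₀ (zero_lt_iff.mpr (oa_ne_zero _))).mp hlower)

end RamificationBreak

theorem stmt15_general (p : ℕ) (hp : p.Prime) (K L : Type) [Field K] [Field L] [Algebra K L]
    [IsGalois K L] [FiniteDimensional K L]
    (hdeg : Module.finrank K L = p)
    (wK : Valuation K Zm0) (wL : Valuation L Zm0)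
    (hwL : Function.Surjective wL)
    (hext : ∀ x : K, wL (algebraMap K L x) = wK x ^ p)
    (hres : wK (p : K) < 1)
    (σ : L ≃ₐ[K] L) (hσ : ∀ τ : L ≃ₐ[K] L, τ ∈ Subgroup.zpowers σ)
    (s : ℤ) (hspos : 0 < s)
    (hs : ∀ τ : L ≃ₐ[K] L, τ ≠ AlgEquiv.refl →
      (∀ a : L, wL a ≤ 1 → wL (τ a - a) ≤ oa (-(s + 1))) ∧
      (∃ a : L, wL a ≤ 1 ∧ wL (τ a - a) = oa (-(s + 1)))) :
    ∀ x : L, wL x ≤ 1 → Algebra.trace K L x = 0 → wL x ≤ oa (-s) →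
      ∃ y : L, wL y ≤ 1 ∧ x = σ y - y := by
  intro x _ hx hxs
  have : NeZero p := ⟨hp.ne_zero⟩
  obtain ⟨π, hπ⟩ := hwL (oa (-1))
  have hunit : ∀ j, 0 < j → j < p → wL (j : L) = 1 := fun _ => valuation_natCast_eq_one hext hp hres
  have hσ1 : σ ≠ AlgEquiv.refl := by
    rintro rfl
    have := orderOf_eq_card_of_forall_mem_zpowers hσ
    rw [IsGalois.card_aut_eq_finrank, hdeg] at this
    exact hp.one_lt.ne' (this.symm.trans orderOf_one)
  have hδ := valuation_div_sub_one_eq_of_break σ hext hπ hdeg hunit hspos (hs σ hσ1).1 (hs σ hσ1).2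
  obtain ⟨y, rfl⟩ := exists_eq_sub_of_trace_eq_zero hσ hx
  obtain ⟨g, rfl⟩ := exists_eq_sum_algebraMap_mul_pow hext hπ hdeg y
  refine ⟨∑ j ∈ univ.erase 0, algebraMap K L (g j) * π ^ (j : ℕ), ?_, ?_⟩
  · refine wL.map_sum_le fun j hj => ?_
    have hj0 : (j : ℕ) ≠ 0 := Fin.val_ne_zero_iff.mpr (ne_of_mem_erase hj)
    have h := (valuation_mul_le_valuation_sub_sum σ hext hπ hunit
      (hδ.trans_lt (by rw [← oa_zero, oa_lt_oa]; omega)) g hj0).trans hxs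
    rw [hδ] at h
    exact (mul_le_mul_iff_left₀ (zero_lt_iff.mpr (oa_ne_zero _))).mp (h.trans_eq (one_mul _).symm)
  · rw [← add_sum_erase _ _ (mem_univ 0)]
    simp [σ.commutes]

/-- Hesselholt, Lemma 2.4, contrapositive form. Let `L/K` be a totally
ramified cyclic extension of degree `p` with ramification break `s` and Galois group
generated by `σ`. If `x ∈ O_L` has `tr_{L/K}(x) = 0` and `v_L(x) ≥ s`, then `x` represents
the zero class in `H¹(G, O_L) ≅ O_L^{tr=0}/(σ−1)O_L`; that is, `x = σ(y) − y` for some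
`y ∈ O_L`. Equivalently, a trace-zero `x` representing a nonzero class has `v_L(x) ≤ s−1`. -/
theorem stmt15 (p : ℕ) (hp : p.Prime) (K L : Type) [Field K] [Field L] [Algebra K L]
    [CharZero K] [IsGalois K L] [FiniteDimensional K L]
    (hdeg : Module.finrank K L = p)
    (wK : Valuation K Zm0) (wL : Valuation L Zm0)
    (hwK : Function.Surjective wK) (hwL : Function.Surjective wL)
    (hKcomplete : @CompleteSpace K (Valued.mk' wK).toUniformSpace)
    (hLcomplete : @CompleteSpace L (Valued.mk' wL).toUniformSpace)
    (hext : ∀ x : K, wL (algebraMap K L x) = wK x ^ p)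
    (hres : wK (p : K) < 1)
    (σ : L ≃ₐ[K] L) (hσ : ∀ τ : L ≃ₐ[K] L, τ ∈ Subgroup.zpowers σ)
    (s : ℤ) (hspos : 0 < s)
    (hs : ∀ τ : L ≃ₐ[K] L, τ ≠ AlgEquiv.refl →
      (∀ a : L, wL a ≤ 1 → wL (τ a - a) ≤ oa (-(s + 1))) ∧
      (∃ a : L, wL a ≤ 1 ∧ wL (τ a - a) = oa (-(s + 1)))) :
    ∀ x : L, wL x ≤ 1 → Algebra.trace K L x = 0 → wL x ≤ oa (-s) →
      ∃ y : L, wL y ≤ 1 ∧ x = σ y - y :=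
  stmt15_general p hp K L hdeg wK wL hwL hext hres σ hσ s hspos hs
end
end
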